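/- arXiv:2410.08966 — 3 statements merged into one kernel-verified Lean document; each statement's English description precedes it below -/
import Mathlib

section
/- Let Γ be a (simple) graph on n vertices with at least c·n^2 edges, where c ∈ (0,1]. Then there exists a subset X of the vertices of size at least 2^{−5}·c·n such that for any two vertices u, v ∈ X (possibly equal) there are at least 2^{−35}·c^9·n^5 walks of length 6 from u to v, i.e. at least that many 5-tuples (z_1,...,z_5) of vertices such that uz_1, z_1z_2, z_2z_3, z_3z_4, z_4z_5, z_5v are all edges of Γ. -/
/-!
Deleting vertices of degree less than `c n` one at a time preserves `|E| ≥ c n |V|`, so `Γ`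
contains a nonempty induced subgraph `H` of minimum degree `δ = c n`. Call `(x, y)` sparse if
`H` has fewer than `t = δ³ / (32 |H|)` walks `x a b y`. Summed over the ordered edges `a b`,
the number of sparse pairs `(x, y)` with `x ~ a` and `b ~ y` counts each sparse pair fewer than
`t` times, so for some `(a, b)` there are at most `δ² / 32` of them. By Markov's inequality at
least `3δ/4` vertices `x ~ a` form a sparse pair with at most `δ / 8` neighbours of `b`; this is
`X`. For `u, v ∈ X` at least `3δ/4` neighbours `y` of `b` are joined to both `u` and `v` by `t`
walks of length three, and gluing them at `y` gives `(3δ/4) t²` walks of length six.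
-/

open Finset

theorem mul_card_filter_lt_le_sum {α : Type} (s : Finset α) (f : α → ℕ) (r : ℝ) :
    r * #{x ∈ s | r < f x} ≤ ∑ x ∈ s, (f x : ℝ) := by
  calc r * #{x ∈ s | r < f x} ≤ ∑ x ∈ s with r < f x, (f x : ℝ) := by
        rw [mul_comm, ← nsmul_eq_mul]
        exact card_nsmul_le_sum _ _ _ fun x hx => (mem_filter.mp hx).2.le
    _ ≤ ∑ x ∈ s, (f x : ℝ) := sum_le_sum_of_subset_of_nonneg (filter_subset _ _) (by simp)

namespace SimpleGraph

variable {W : Type}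

def sixWalks (H : SimpleGraph W) (u v : W) : Set (W × W × W × W × W) :=
  { z | H.Adj u z.1 ∧ H.Adj z.1 z.2.1 ∧ H.Adj z.2.1 z.2.2.1 ∧
      H.Adj z.2.2.1 z.2.2.2.1 ∧ H.Adj z.2.2.2.1 z.2.2.2.2 ∧ H.Adj z.2.2.2.2 v }

theorem ncard_sixWalks_le_of_embedding {V : Type} [Finite V] {H : SimpleGraph W}
    {G : SimpleGraph V} (f : H ↪g G) (u v : W) :
    (H.sixWalks u v).ncard ≤ (G.sixWalks (f u) (f v)).ncard :=
  Set.ncard_le_ncard_of_injOn (fun z => (f z.1, f z.2.1, f z.2.2.1, f z.2.2.2.1, f z.2.2.2.2))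
    (fun _ hz => by simpa [sixWalks] using hz)
    (fun _ _ _ _ h => by simpa [Prod.ext_iff] using h) (Set.toFinite _)

variable [Fintype W] (H : SimpleGraph W) [DecidableRel H.Adj]

/-- The pairs `(a, b)` of inner vertices of the walks `x a b y` of length three. -/
def threeWalks (x y : W) : Finset (W × W) :=
  {p | H.Adj x p.1 ∧ H.Adj p.1 p.2 ∧ H.Adj p.2 y}

theorem card_threeWalks_comm (x y : W) : #(H.threeWalks x y) = #(H.threeWalks y x) :=
  card_nbij' Prod.swap Prod.swap
    (fun _ hp => by simp_all [threeWalks, H.adj_comm])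
    (fun _ hp => by simp_all [threeWalks, H.adj_comm])
    (fun _ _ => rfl) (fun _ _ => rfl)

theorem sum_card_threeWalks_mul_le_ncard_sixWalks (S : Finset W) (u v : W) :
    ∑ y ∈ S, #(H.threeWalks u y) * #(H.threeWalks y v) ≤ (H.sixWalks u v).ncard := by
  classical
  calc ∑ y ∈ S, #(H.threeWalks u y) * #(H.threeWalks y v)
      = #(S.sigma fun y => H.threeWalks u y ×ˢ H.threeWalks y v) := by
        simp [card_sigma, card_product]
    _ ≤ (H.sixWalks u v).ncard := by
        rw [← Set.ncard_coe_finset]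
        refine Set.ncard_le_ncard_of_injOn (fun s => (s.2.1.1, s.2.1.2, s.1, s.2.2.1, s.2.2.2))
          ?_ ?_ (Set.toFinite _)
        · rintro ⟨y, p, q⟩ h
          simp_all [threeWalks, sixWalks]
        · rintro ⟨y, p, q⟩ - ⟨y', p', q'⟩ - h
          simp_all [Prod.ext_iff]

theorem card_mul_sq_le_ncard_sixWalks {S : Finset W} {u v : W} {t : ℝ} (ht : 0 ≤ t)
    (hS : ∀ y ∈ S, t ≤ #(H.threeWalks u y) ∧ t ≤ #(H.threeWalks y v)) :
    #S * t ^ 2 ≤ (H.sixWalks u v).ncard := by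
  calc #S * t ^ 2 ≤ ∑ y ∈ S, (#(H.threeWalks u y) : ℝ) * #(H.threeWalks y v) := by
        rw [← nsmul_eq_mul]
        refine card_nsmul_le_sum _ _ _ fun y hy => ?_
        rw [sq]
        exact mul_le_mul (hS y hy).1 (hS y hy).2 ht (ht.trans (hS y hy).1)
    _ ≤ (H.sixWalks u v).ncard := by
        exact_mod_cast H.sum_card_threeWalks_mul_le_ncard_sixWalks S u v

noncomputable def fewThreeWalkPairs (t : ℝ) : Finset (W × W) :=
  {q | (#(H.threeWalks q.1 q.2) : ℝ) < t}

theorem card_filter_adj_eq_sum_degree : #{p : W × W | H.Adj p.1 p.2} = ∑ v, H.degree v := by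
  rw [card_filter, Fintype.sum_prod_type]
  refine sum_congr rfl fun v _ => ?_
  rw [← card_neighborFinset_eq_degree, neighborFinset_eq_filter, card_filter]

theorem sum_card_fewThreeWalkPairs_le {t : ℝ} (ht : 0 ≤ t) :
    ∑ p : W × W with H.Adj p.1 p.2,
        (#{q ∈ H.fewThreeWalkPairs t | H.Adj q.1 p.1 ∧ H.Adj p.2 q.2} : ℝ)
      ≤ Fintype.card W ^ 2 * t := by
  have hcount := sum_card_bipartiteAbove_eq_sum_card_bipartiteBelow
    (fun (p q : W × W) => H.Adj q.1 p.1 ∧ H.Adj p.2 q.2)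
    (s := {p : W × W | H.Adj p.1 p.2}) (t := H.fewThreeWalkPairs t)
  have hbelow : ∀ q, bipartiteBelow (fun (p q : W × W) => H.Adj q.1 p.1 ∧ H.Adj p.2 q.2)
      {p : W × W | H.Adj p.1 p.2} q = H.threeWalks q.1 q.2 := by
    intro q
    ext p
    simp [bipartiteBelow, threeWalks]
    tauto
  simp only [bipartiteAbove, hbelow] at hcount
  calc _ = ∑ q ∈ H.fewThreeWalkPairs t, (#(H.threeWalks q.1 q.2) : ℝ) := by
        exact_mod_cast hcount
    _ ≤ #(H.fewThreeWalkPairs t) * t := by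
        simpa using sum_le_card_nsmul _ _ t fun q hq => (mem_filter.mp hq).2.le
    _ ≤ Fintype.card W ^ 2 * t := by
        gcongr
        exact_mod_cast (card_le_univ _).trans_eq (by simp [sq])

theorem exists_card_fewThreeWalkPairs_le [Nonempty W] {δ : ℝ} (hδ : 0 < δ)
    (hdeg : ∀ w, δ ≤ H.degree w) :
    ∃ a b, (#{q ∈ H.fewThreeWalkPairs (δ ^ 3 / (32 * Fintype.card W)) |
      H.Adj q.1 a ∧ H.Adj b q.2} : ℝ) ≤ δ ^ 2 / 32 := by
  set D : Finset (W × W) := {p | H.Adj p.1 p.2} with hD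
  have hm : (0 : ℝ) < Fintype.card W := by exact_mod_cast Fintype.card_pos
  have hDcard : Fintype.card W * δ ≤ #D := by
    rw [hD, card_filter_adj_eq_sum_degree, Nat.cast_sum]
    simpa using card_nsmul_le_sum univ (fun v => (H.degree v : ℝ)) δ fun v _ => hdeg v
  have hDne : D.Nonempty := by
    rw [← card_pos]
    exact_mod_cast (by positivity : 0 < Fintype.card W * δ).trans_le hDcard
  obtain ⟨⟨a, b⟩, -, hle⟩ := exists_le_of_sum_le hDne (calc
    ∑ p ∈ D, (#{q ∈ H.fewThreeWalkPairs (δ ^ 3 / (32 * Fintype.card W)) |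
          H.Adj q.1 p.1 ∧ H.Adj p.2 q.2} : ℝ)
      ≤ Fintype.card W ^ 2 * (δ ^ 3 / (32 * Fintype.card W)) :=
        H.sum_card_fewThreeWalkPairs_le (by positivity)
    _ = Fintype.card W * δ * (δ ^ 2 / 32) := by field_simp
    _ ≤ ∑ _p ∈ D, δ ^ 2 / 32 := by
        rw [sum_const, nsmul_eq_mul]
        gcongr)
  exact ⟨a, b, hle⟩

theorem card_filter_adj_adj_eq_sum [DecidableEq W] (s : Finset (W × W)) (a b : W) :
    #{q ∈ s | H.Adj q.1 a ∧ H.Adj b q.2}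
      = ∑ x ∈ H.neighborFinset a, #{y ∈ H.neighborFinset b | (x, y) ∈ s} := by
  have : {q ∈ s | H.Adj q.1 a ∧ H.Adj b q.2}
      = {q ∈ H.neighborFinset a ×ˢ H.neighborFinset b | q ∈ s} := by
    ext q
    simp [H.adj_comm a]
    tauto
  rw [this, card_filter, sum_product]
  simp_rw [card_filter]

theorem exists_large_set_forall_le_ncard_sixWalks [Nonempty W] {δ : ℝ} (hδ : 0 < δ)
    (hdeg : ∀ w, δ ≤ H.degree w) :
    ∃ X : Finset W, 3 * δ / 4 ≤ #X ∧ ∀ u ∈ X, ∀ v ∈ X,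
      3 * δ / 4 * (δ ^ 3 / (32 * Fintype.card W)) ^ 2 ≤ (H.sixWalks u v).ncard := by
  classical
  obtain ⟨a, b, hsparse⟩ := H.exists_card_fewThreeWalkPairs_le hδ hdeg
  set t := δ ^ 3 / (32 * Fintype.card W)
  set F := H.fewThreeWalkPairs t
  set row : W → ℕ := fun x => #{y ∈ H.neighborFinset b | (x, y) ∈ F}
  have hrow : ∑ x ∈ H.neighborFinset a, (row x : ℝ) ≤ δ ^ 2 / 32 := by
    rw [H.card_filter_adj_adj_eq_sum, Nat.cast_sum] at hsparse
    exact hsparse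
  refine ⟨{x ∈ H.neighborFinset a | row x ≤ δ / 8}, ?_, fun u hu v hv => ?_⟩
  · have hmarkov := mul_card_filter_lt_le_sum (H.neighborFinset a) row (δ / 8)
    have hsplit := card_filter_add_card_filter_not (s := H.neighborFinset a)
      (fun x => (row x : ℝ) ≤ δ / 8)
    simp only [not_le] at hsplit
    have ha := hdeg a
    rw [← card_neighborFinset_eq_degree, ← hsplit, Nat.cast_add] at ha
    nlinarith
  set M := {y ∈ H.neighborFinset b | (u, y) ∉ F ∧ (v, y) ∉ F}
  have hM : 3 * δ / 4 ≤ #M := by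
    have hcover : H.neighborFinset b ⊆
        M ∪ {y ∈ H.neighborFinset b | (u, y) ∈ F} ∪ {y ∈ H.neighborFinset b | (v, y) ∈ F} := by
      intro y hy
      simp only [M, mem_union, mem_filter]
      tauto
    have hcard : #(H.neighborFinset b) ≤ #M + row u + row v := (card_le_card hcover).trans
      ((card_union_le _ _).trans (Nat.add_le_add_right (card_union_le _ _) _))
    have hb := hdeg b
    rw [← card_neighborFinset_eq_degree] at hb
    have hu' := (mem_filter.mp hu).2
    have hv' := (mem_filter.mp hv).2
    have : (#(H.neighborFinset b) : ℝ) ≤ #M + row u + row v := by exact_mod_cast hcard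
    linarith
  refine le_trans (by gcongr) (H.card_mul_sq_le_ncard_sixWalks (S := M) (by positivity)
    fun y hy => ?_)
  obtain ⟨-, huy, hvy⟩ := mem_filter.mp hy
  simp only [F, fewThreeWalkPairs, mem_filter, mem_univ, true_and, not_lt] at huy hvy
  exact ⟨huy, H.card_threeWalks_comm y v ▸ hvy⟩

theorem exists_embedding_forall_le_degree {V : Type} [Fintype V] [DecidableEq V]
    (G : SimpleGraph V) [DecidableRel G.Adj] {δ : ℝ} (hE : δ * Fintype.card V ≤ #G.edgeFinset)
    (hG : 0 < #G.edgeFinset) :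
    ∃ (W : Type) (_ : Fintype W) (_ : Nonempty W) (H : SimpleGraph W) (_ : DecidableRel H.Adj),
      Nonempty (H ↪g G) ∧ ∀ w, δ ≤ H.degree w := by
  induction h : Fintype.card V generalizing V with
  | zero =>
    have : IsEmpty V := Fintype.card_eq_zero_iff.mp h
    simp [edgeFinset_eq_empty.mpr (Subsingleton.elim G ⊥)] at hG
  | succ k ih =>
    by_cases hdeg : ∀ v, δ ≤ G.degree v
    · obtain ⟨e, -⟩ := card_pos.mp hG
      exact ⟨V, _, ⟨e.out.1⟩, G, _, ⟨Embedding.refl⟩, hdeg⟩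
    push Not at hdeg
    obtain ⟨x, hx⟩ := hdeg
    have hcard : (#(G.induce {x}ᶜ).edgeFinset : ℝ) = #G.edgeFinset - G.degree x := by
      rw [card_edgeFinset_induce_compl_singleton, card_edgeFinset_deleteIncidenceSet,
        Nat.cast_sub (G.degree_le_card_edgeFinset x)]
    have hV : Fintype.card ({x}ᶜ : Set V) = k := by
      rw [Fintype.card_compl_set, h]
      simp
    have hδ : 0 < δ := (Nat.cast_nonneg _).trans_lt hx
    rw [h, Nat.cast_succ] at hE
    have hE' : δ * k < #(G.induce {x}ᶜ).edgeFinset := by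
      rw [hcard]
      linarith
    obtain ⟨W, _, _, H, _, ⟨f⟩, hH⟩ := ih (G.induce {x}ᶜ) (by rw [hV]; exact hE'.le)
      (by exact_mod_cast (by positivity : (0 : ℝ) ≤ δ * k).trans_lt hE') hV
    exact ⟨W, _, ‹_›, H, _, ⟨f.trans (Embedding.induce _)⟩, hH⟩

end SimpleGraph

open SimpleGraph

/-- If `Γ` is a graph on `n` vertices with at least `c·n²` edges (`c ∈ (0,1]`), then there is
a set `X` of at least `2⁻⁵·c·n` vertices such that between any two (possibly equal) vertices
of `X` there are at least `2⁻³⁵·c⁹·n⁵` walks of length `6`. -/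
theorem many_paths_of_length_six (V : Type) [Fintype V] [DecidableEq V]
    (Γ : SimpleGraph V) [DecidableRel Γ.Adj] (c : ℝ) (hc : 0 < c) (hc1 : c ≤ 1)
    (hE : c * (Fintype.card V : ℝ) ^ 2 ≤ (Γ.edgeFinset.card : ℝ)) :
    ∃ X : Finset V,
      (2 : ℝ) ^ (-5 : ℤ) * c * (Fintype.card V : ℝ) ≤ (X.card : ℝ) ∧
      ∀ u ∈ X, ∀ v ∈ X,
        (2 : ℝ) ^ (-35 : ℤ) * c ^ 9 * (Fintype.card V : ℝ) ^ 5 ≤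
          ((({ z : V × V × V × V × V |
              Γ.Adj u z.1 ∧ Γ.Adj z.1 z.2.1 ∧ Γ.Adj z.2.1 z.2.2.1 ∧
              Γ.Adj z.2.2.1 z.2.2.2.1 ∧ Γ.Adj z.2.2.2.1 z.2.2.2.2 ∧
              Γ.Adj z.2.2.2.2 v } : Set (V × V × V × V × V)).ncard : ℝ)) := by
  rcases isEmpty_or_nonempty V with hV | hV
  · exact ⟨∅, by simp, by simp⟩
  have hn : (0 : ℝ) < Fintype.card V := by exact_mod_cast Fintype.card_pos
  obtain ⟨W, _, _, H, _, ⟨f⟩, hdeg⟩ := Γ.exists_embedding_forall_le_degree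
    (δ := c * Fintype.card V) (by linarith)
    (by exact_mod_cast (by positivity : 0 < c * (Fintype.card V : ℝ) ^ 2).trans_le hE)
  obtain ⟨X, hX, hwalks⟩ := H.exists_large_set_forall_le_ncard_sixWalks (by positivity) hdeg
  have hm : (0 : ℝ) < Fintype.card W := by exact_mod_cast Fintype.card_pos
  have hmn : (Fintype.card W : ℝ) ≤ Fintype.card V := by
    exact_mod_cast Fintype.card_le_of_embedding f.toEmbedding
  set n : ℝ := (Fintype.card V : ℝ)
  refine ⟨X.map f.toEmbedding, ?_, ?_⟩
  · rw [card_map, show (2 : ℝ) ^ (-5 : ℤ) = 1 / 32 by norm_num]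
    nlinarith [mul_pos hc hn]
  simp only [mem_map]
  rintro _ ⟨u, hu, rfl⟩ _ ⟨v, hv, rfl⟩
  refine le_trans ?_ ((hwalks u hu v hv).trans
    (Nat.cast_le.mpr (ncard_sixWalks_le_of_embedding f u v)))
  have hc9 : c ^ 9 * n ^ 5 ≤ c ^ 7 * n ^ 5 :=
    mul_le_mul_of_nonneg_right (pow_le_pow_of_le_one hc.le hc1 (by norm_num)) (by positivity)
  have ht : c ^ 3 * n ^ 2 / 32 ≤ (c * n) ^ 3 / (32 * Fintype.card W) := by
    rw [le_div_iff₀ (by positivity)]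
    nlinarith [mul_le_mul_of_nonneg_left hmn (by positivity : 0 ≤ c ^ 3 * n ^ 2)]
  calc (2 : ℝ) ^ (-35 : ℤ) * c ^ 9 * n ^ 5 ≤ 3 * (c * n) / 4 * (c ^ 3 * n ^ 2 / 32) ^ 2 := by
        rw [show (2 : ℝ) ^ (-35 : ℤ) = 1 / 2 ^ 35 by norm_num]
        nlinarith [(by positivity : 0 ≤ c ^ 7 * n ^ 5)]
    _ ≤ _ := by gcongr
end

section
/- Let G be a finite-dimensional F_p-vector space, β : G × G → F_p^r a bilinear map, and V ≤ G a subspace such that for every nonzero λ ∈ F_p^r the bilinear form (x,y) ↦ λ·β(x,y) restricted to V × V has rank at least s. Fix a coset a + V and let B = {(x,y) ∈ (a+V) × V : β(x,y) = 0}; for x ∈ a+V write B_{x·} = {y ∈ V : β(x,y) = 0}. Let S ≤ V be a subspace of codimension d and let k be a positive integer. Then (S ∩ B_{x_1·} ∩ ... ∩ B_{x_k·}) + (S ∩ B_{y_1·} ∩ ... ∩ B_{y_k·}) = S holds for all but at most 81·p^{2d + 4kr − s/4}·|V|^{2k} of the choices (x_1,...,x_k,y_1,...,y_k) ∈ (a+V)^{2k}.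 -/
/-- `HasBilinRankDecomp b m` says that the bilinear form `b` can be written as a sum of `m`
products of pairs of linear forms.  The rank of `b` is the least such `m`. -/
def HasBilinRankDecomp {k V : Type*} [CommSemiring k] [AddCommMonoid V] [Module k V]
    (b : V → V → k) (m : ℕ) : Prop :=
  ∃ α α' : Fin m → (V →ₗ[k] k), ∀ x y, b x y = ∑ i, α i x * α' i y

/-!
If `(S ∩ B_{x₁·} ∩ … ∩ B_{x_k·}) + (S ∩ B_{y₁·} ∩ … ∩ B_{y_k·})` is a proper subspace of `S`,
a nonzero functional `φ` on `S` kills it. Since `φ` vanishes on the common kernel of the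
`β(xᵢ, ·)|_S`, it is a combination `∑ cᵢ · β(xᵢ, ·)|_S`, and likewise `∑ c'ᵢ · β(yᵢ, ·)|_S`
with `c' ≠ 0`. For fixed coefficients with `c'ᵢ₀ ≠ 0`, the tuples `(x, y)` satisfying this
identity lie in a coset of the kernel of a linear map on `V^{2k}` whose image contains that
of `v ↦ c'ᵢ₀ · β(v, ·)|_S`. That map has rank at least `s - d`, because restricting the second
argument from `V` to `S` lowers the rank by at most the codimension `d`. Summing over the
`p^{2kr}` pairs `(c, c')` bounds the number of tuples with a proper sum by
`p^{2kr - max(s - d, 0)}·|V|^{2k}`.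
-/

open Module LinearMap

section Rank

variable {K M N P : Type*} [Field K] [AddCommGroup M] [Module K M] [AddCommGroup N] [Module K N]
  [AddCommGroup P] [Module K P]

theorem hasBilinRankDecomp_finrank_range [FiniteDimensional K M] (b : M →ₗ[K] Dual K M) :
    HasBilinRankDecomp (fun x y => b x y) (finrank K (range b)) := by
  have := Module.Free.of_divisionRing K (range b)
  let e := Module.finBasis K (range b)
  refine ⟨fun i => e.coord i ∘ₗ b.rangeRestrict, fun i => e i, fun x y => ?_⟩
  have hx : b x = ∑ i, e.repr (b.rangeRestrict x) i • (e i : Dual K M) := by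
    have := congrArg Subtype.val (e.sum_repr (b.rangeRestrict x))
    rw [Submodule.coe_sum] at this
    simp only [Submodule.coe_smul] at this
    exact this.symm
  simp [hx]

theorem finrank_range_le_finrank_range_comp_add_finrank_ker [FiniteDimensional K M]
    [FiniteDimensional K N] (f : M →ₗ[K] N) (g : N →ₗ[K] P) :
    finrank K (range f) ≤ finrank K (range (g ∘ₗ f)) + finrank K (ker g) := by
  have hker := lift_rank_comap_le (f := f) (ker g)
  rw [← ker_comp, ← finrank_eq_rank, ← finrank_eq_rank, ← finrank_eq_rank] at hker
  simp only [Cardinal.lift_natCast] at hker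
  have hker' : finrank K (ker (g ∘ₗ f)) ≤ finrank K (ker g) + finrank K (ker f) := by
    exact_mod_cast hker
  have := (g ∘ₗ f).finrank_range_add_finrank_ker
  have := f.finrank_range_add_finrank_ker
  omega

theorem finrank_ker_dualMap_add_finrank_eq [FiniteDimensional K M] {ι : N →ₗ[K] M}
    (hι : Function.Injective ι) : finrank K (ker ι.dualMap) + finrank K N = finrank K M := by
  rw [ker_dualMap_eq_dualAnnihilator_range, ← finrank_range_of_inj hι, add_comm]
  exact Subspace.finrank_add_finrank_dualAnnihilator_eq _

end Rank

section Forms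

variable {K G : Type*} [Field K] [AddCommGroup G] [Module K G] {r k : ℕ}
  (β : G →ₗ[K] G →ₗ[K] (Fin r → K)) (S : Submodule K G)

def dotForm (lam : Fin r → K) : G →ₗ[K] Dual K S :=
  (β.compr₂ (dotProductEquiv K (Fin r) lam)).compl₂ S.subtype

def combForm (c : Fin k → Fin r → K) : (Fin k → G) →ₗ[K] Dual K S :=
  ∑ i, dotForm β S (c i) ∘ₗ proj i

@[simp]
theorem dotForm_apply (lam : Fin r → K) (x : G) (w : S) :
    dotForm β S lam x w = lam ⬝ᵥ β x w := rfl

@[simp]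
theorem combForm_apply (c : Fin k → Fin r → K) (X : Fin k → G) (w : S) :
    combForm β S c X w = ∑ i, c i ⬝ᵥ β (X i) w := by
  simp [combForm]

theorem exists_combForm_eq (X : Fin k → G) (φ : Dual K S)
    (hφ : ∀ w : S, (∀ i, β (X i) w = 0) → φ w = 0) : ∃ c, combForm β S c X = φ := by
  let L : Fin k × Fin r → Dual K S := fun ij => (proj ij.2 ∘ₗ β (X ij.1)) ∘ₗ S.subtype
  have hL : ⨅ ij, ker (L ij) ≤ ker φ := fun w hw => by
    simp only [Submodule.mem_iInf, mem_ker] at hw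
    exact hφ w fun i => funext fun j => hw (i, j)
  obtain ⟨c, hc⟩ := (Submodule.mem_span_range_iff_exists_fun K).1 (mem_span_of_iInf_ker_le_ker hL)
  refine ⟨Function.curry c, LinearMap.ext fun w => ?_⟩
  simp [← hc, L, Fintype.sum_prod_type, dotProduct]

theorem exists_combForm_eq_of_sup_ne (V : Submodule K G) (hSV : S ≤ V) (X Y : Fin k → G)
    (h : (S ⊓ ⨅ i, V ⊓ ker (β (X i))) ⊔ (S ⊓ ⨅ i, V ⊓ ker (β (Y i))) ≠ S) :
    ∃ c c' : Fin k → Fin r → K, c' ≠ 0 ∧ combForm β S c X = combForm β S c' Y := by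
  set W := (S ⊓ ⨅ i, V ⊓ ker (β (X i))) ⊔ (S ⊓ ⨅ i, V ⊓ ker (β (Y i)))
  have hW : W.comap S.subtype < ⊤ := by
    refine lt_top_iff_ne_top.2 fun htop =>
      h (le_antisymm (sup_le inf_le_left inf_le_left) fun w hw => ?_)
    have : (⟨w, hw⟩ : S) ∈ W.comap S.subtype := htop ▸ Submodule.mem_top
    exact this
  obtain ⟨φ, hφ, hφW⟩ := Submodule.exists_dual_map_eq_bot_of_lt_top hW inferInstance
  have hvanish : ∀ Z : Fin k → G, (S ⊓ ⨅ i, V ⊓ ker (β (Z i))) ≤ W →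
      ∃ c, combForm β S c Z = φ := by
    intro Z hZ
    refine exists_combForm_eq β S Z φ fun w hw => ?_
    have : w ∈ W.comap S.subtype :=
      hZ ⟨w.2, Submodule.mem_iInf _ |>.2 fun i => ⟨hSV w.2, hw i⟩⟩
    simpa [hφW] using Submodule.mem_map_of_mem (f := φ) this
  obtain ⟨c, hc⟩ := hvanish X le_sup_left
  obtain ⟨c', hc'⟩ := hvanish Y le_sup_right
  refine ⟨c, c', ?_, hc.trans hc'.symm⟩
  rintro rfl
  exact hφ (hc'.symm.trans (LinearMap.ext fun w => by simp))

theorem sub_le_finrank_range_dotForm {V : Submodule K G} [FiniteDimensional K V] {s : ℝ}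
    {d : ℕ} (hSV : S ≤ V) (hcodim : finrank K V = finrank K S + d) {ν : Fin r → K}
    (hs : ∀ m : ℕ, HasBilinRankDecomp (fun x y : V => ∑ i, ν i * β (x : G) (y : G) i) m →
      s ≤ m) :
    s - d ≤ finrank K (range (dotForm β S ν ∘ₗ V.subtype)) := by
  have hrank := hs _ (hasBilinRankDecomp_finrank_range (dotForm β V ν ∘ₗ V.subtype))
  have hrestrict := finrank_range_le_finrank_range_comp_add_finrank_ker
    (dotForm β V ν ∘ₗ V.subtype) (Submodule.inclusion hSV).dualMap
  have hker := finrank_ker_dualMap_add_finrank_eq (Submodule.inclusion_injective hSV)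
  change _ ≤ finrank K (range (dotForm β S ν ∘ₗ V.subtype)) + _ at hrestrict
  have hloss : finrank K (range (dotForm β V ν ∘ₗ V.subtype)) ≤
      finrank K (range (dotForm β S ν ∘ₗ V.subtype)) + d := by
    omega
  have hlossℝ := (Nat.cast_le (α := ℝ)).2 hloss
  push_cast at hlossℝ
  linarith

def coincidenceSet (a : G) (V : Submodule K G) (c c' : Fin k → Fin r → K) :
    Set ((Fin k → G) × (Fin k → G)) :=
  {xy | (∀ i, xy.1 i - a ∈ V) ∧ (∀ i, xy.2 i - a ∈ V) ∧
    combForm β S c xy.1 = combForm β S c' xy.2}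

end Forms

theorem Set.ncard_le_ncard_of_sub_mem {M : Type*} [AddGroup M] {A T : Set M} (hT : T.Finite)
    (h : ∀ x ∈ A, ∀ y ∈ A, x - y ∈ T) : A.ncard ≤ T.ncard := by
  obtain rfl | ⟨y, hy⟩ := A.eq_empty_or_nonempty
  · simp
  exact Set.ncard_le_ncard_of_injOn (· - y) (fun x hx => h x hx y hy)
    (fun x _ x' _ hxx' => sub_left_injective hxx') hT

theorem LinearMap.natCard_ker_mul_pow_finrank_range {K M N : Type*} [Field K] [Finite K]
    [AddCommGroup M] [Module K M] [Module.Finite K M] [AddCommGroup N] [Module K N]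
    (f : M →ₗ[K] N) : Nat.card (ker f) * Nat.card K ^ finrank K (range f) = Nat.card M := by
  rw [natCard_eq_pow_finrank (K := K), natCard_eq_pow_finrank (K := K) (V := M), ← pow_add,
    add_comm, f.finrank_range_add_finrank_ker]

section Counting

variable {K G : Type*} [Field K] [Finite K] [AddCommGroup G] [Module K G] [Finite G] {r k : ℕ}
  (β : G →ₗ[K] G →ₗ[K] (Fin r → K)) (S : Submodule K G)

theorem ncard_coincidenceSet_mul_le (a : G) (V : Submodule K G) (c c' : Fin k → Fin r → K)
    (i₀ : Fin k) :
    (coincidenceSet β S a V c c').ncard *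
        Nat.card K ^ finrank K (range (dotForm β S (c' i₀) ∘ₗ V.subtype)) ≤
      Nat.card V ^ (2 * k) := by
  classical
  let ι := LinearMap.compLeft V.subtype (Fin k)
  let F : (Fin k → V) × (Fin k → V) →ₗ[K] Dual K S :=
    combForm β S c' ∘ₗ ι ∘ₗ snd K _ _ - combForm β S c ∘ₗ ι ∘ₗ fst K _ _
  -- `x ↦ x - y` embeds the coincidence set into `ker F`, read in `V`-coordinates
  have hcard : (coincidenceSet β S a V c c').ncard ≤ Nat.card (ker F) := by
    refine (Set.ncard_le_ncard_of_sub_mem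
      (T := (fun u : ker F => (ι u.1.1, ι u.1.2)) '' Set.univ) (Set.toFinite _) ?_).trans
      ((Set.ncard_image_le (Set.toFinite _)).trans (Set.ncard_univ _).le)
    rintro x ⟨hx₁, hx₂, hx⟩ y ⟨hy₁, hy₂, hy⟩
    refine ⟨⟨(fun i => ⟨x.1 i - y.1 i, by simpa using sub_mem (hx₁ i) (hy₁ i)⟩,
      fun i => ⟨x.2 i - y.2 i, by simpa using sub_mem (hx₂ i) (hy₂ i)⟩), ?_⟩, trivial, rfl⟩
    simp only [mem_ker, F, LinearMap.sub_apply]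
    change combForm β S c' (x.2 - y.2) - combForm β S c (x.1 - y.1) = 0
    rw [map_sub, map_sub, hx, hy, sub_self]
  have hrange : range (dotForm β S (c' i₀) ∘ₗ V.subtype) ≤ range F := by
    rintro _ ⟨v, rfl⟩
    refine ⟨(0, Pi.single i₀ v), ?_⟩
    ext w
    simp [F, ι, Pi.single_apply, apply_ite, ite_apply]
  calc _ ≤ Nat.card (ker F) * Nat.card K ^ finrank K (range F) :=
        Nat.mul_le_mul hcard (Nat.pow_le_pow_right Nat.card_pos (Submodule.finrank_mono hrange))
    _ = Nat.card V ^ (2 * k) := by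
      rw [F.natCard_ker_mul_pow_finrank_range, Nat.card_prod, Nat.card_fun, Nat.card_fin,
        two_mul, pow_add]

theorem ncard_sup_ne_mul_pow_le (a : G) (V : Submodule K G) (hSV : S ≤ V) (t : ℕ)
    (ht : ∀ ν : Fin r → K, ν ≠ 0 → t ≤ finrank K (range (dotForm β S ν ∘ₗ V.subtype))) :
    ({ xy : (Fin k → G) × (Fin k → G) |
        ((∀ i, xy.1 i - a ∈ V) ∧ (∀ i, xy.2 i - a ∈ V)) ∧
        ¬ ((S ⊓ ⨅ i, V ⊓ ker (β (xy.1 i))) ⊔ (S ⊓ ⨅ i, V ⊓ ker (β (xy.2 i))) = S) }.ncard) *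
        Nat.card K ^ t ≤
      Nat.card K ^ (2 * (k * r)) * Nat.card V ^ (2 * k) := by
  classical
  have := Fintype.ofFinite K
  let I := (Finset.univ : Finset ((Fin k → Fin r → K) × (Fin k → Fin r → K))).filter (·.2 ≠ 0)
  have hcoincidence : ∀ cc ∈ I, (coincidenceSet β S a V cc.1 cc.2).ncard * Nat.card K ^ t ≤
      Nat.card V ^ (2 * k) := by
    intro cc hcc
    obtain ⟨i₀, hi₀⟩ := Function.ne_iff.1 (Finset.mem_filter.1 hcc).2
    exact (Nat.mul_le_mul_left _ (Nat.pow_le_pow_right Nat.card_pos (ht _ hi₀))).trans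
      (ncard_coincidenceSet_mul_le β S a V cc.1 cc.2 i₀)
  have hI : I.card ≤ Nat.card K ^ (2 * (k * r)) := by
    refine (Finset.card_filter_le _ _).trans_eq ?_
    rw [Finset.card_univ, ← Nat.card_eq_fintype_card, Nat.card_prod, Nat.card_fun, Nat.card_fun,
      Nat.card_fin, Nat.card_fin, ← pow_mul, two_mul, pow_add, mul_comm r]
  refine (Nat.mul_le_mul_right _ ((Set.ncard_le_ncard
    (t := ⋃ cc ∈ I, coincidenceSet β S a V cc.1 cc.2) ?_ (Set.toFinite _)).trans
      (I.set_ncard_biUnion_le _))).trans ?_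
  · rintro xy ⟨⟨hx, hy⟩, hne⟩
    obtain ⟨c, c', hc', heq⟩ := exists_combForm_eq_of_sup_ne β S V hSV xy.1 xy.2 hne
    exact Set.mem_biUnion (x := (c, c')) (by simpa [I] using hc') ⟨hx, hy, heq⟩
  calc _ ≤ ∑ cc ∈ I, Nat.card V ^ (2 * k) := by rw [Finset.sum_mul]; exact Finset.sum_le_sum hcoincidence
    _ ≤ _ := by rw [Finset.sum_const, smul_eq_mul]; gcongr

end Counting

theorem subspace_sums_regularity_general (p : ℕ) [hp : Fact p.Prime]
    (G : Type) [AddCommGroup G] [Module (ZMod p) G] [Fintype G]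
    (r : ℕ) (β : G →ₗ[ZMod p] G →ₗ[ZMod p] (Fin r → ZMod p))
    (V : Submodule (ZMod p) G) (s : ℝ)
    (hrank : ∀ lam : Fin r → ZMod p, lam ≠ 0 →
      ∀ m : ℕ, HasBilinRankDecomp (fun x y : V => ∑ i, lam i * β (x : G) (y : G) i) m →
        s ≤ (m : ℝ))
    (a : G) (S : Submodule (ZMod p) G) (hSV : S ≤ V) (d : ℕ)
    (hcodim : Module.finrank (ZMod p) V = Module.finrank (ZMod p) S + d)
    (k : ℕ) :
    (({ xy : (Fin k → G) × (Fin k → G) |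
        ((∀ i, xy.1 i - a ∈ V) ∧ (∀ i, xy.2 i - a ∈ V)) ∧
        ¬ ((S ⊓ ⨅ i, V ⊓ LinearMap.ker (β (xy.1 i))) ⊔
            (S ⊓ ⨅ i, V ⊓ LinearMap.ker (β (xy.2 i))) = S) } :
      Set ((Fin k → G) × (Fin k → G))).ncard : ℝ) ≤
      81 * (p : ℝ) ^ ((2 * (d : ℝ) + 4 * k * r) - s / 4) * (Nat.card ↥V : ℝ) ^ (2 * k) := by
  have hp1 : (1 : ℝ) ≤ p := by exact_mod_cast hp.out.one_le
  set t := ⌈s - d⌉₊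
  have ht : ∀ ν : Fin r → ZMod p, ν ≠ 0 →
      t ≤ finrank (ZMod p) (range (dotForm β S ν ∘ₗ V.subtype)) := fun ν hν =>
    Nat.ceil_le.2 (sub_le_finrank_range_dotForm β S hSV hcodim (hrank ν hν))
  have hcount := Nat.cast_le (α := ℝ) |>.2 (ncard_sup_ne_mul_pow_le (k := k) β S a V hSV t ht)
  rw [Nat.card_zmod] at hcount
  push_cast at hcount
  have hexp : (2 * (k * r) : ℝ) - t ≤ 2 * d + 4 * k * r - s / 4 := by
    have := Nat.le_ceil (s - d)
    rcases le_or_gt 0 s with hs | hs <;> nlinarith [(by positivity : (0 : ℝ) ≤ k * r)]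
  have hp0 : (0 : ℝ) < p := by linarith
  calc _ = _ * (p : ℝ) ^ t * (p : ℝ) ^ (-(t : ℝ)) := by
        rw [mul_assoc, ← Real.rpow_natCast, ← Real.rpow_add hp0, add_neg_cancel, Real.rpow_zero,
          mul_one]
    _ ≤ (p : ℝ) ^ (2 * (k * r)) * (Nat.card V : ℝ) ^ (2 * k) * (p : ℝ) ^ (-(t : ℝ)) := by
        gcongr
    _ = (p : ℝ) ^ ((2 * (k * r) : ℝ) - t) * (Nat.card V : ℝ) ^ (2 * k) := by
        rw [sub_eq_add_neg, Real.rpow_add hp0, ← Real.rpow_natCast]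
        push_cast
        ring
    _ ≤ (p : ℝ) ^ (2 * (d : ℝ) + 4 * k * r - s / 4) * (Nat.card V : ℝ) ^ (2 * k) := by
        gcongr
    _ ≤ _ := by
        rw [mul_assoc (81 : ℝ)]
        exact le_mul_of_one_le_left (by positivity) (by norm_num : (1 : ℝ) ≤ 81)

/-- Let `β : G × G → F_p^r` be bilinear, with every nonzero combination `λ·β` of rank at
least `s` on `V × V`; let `B_{x·} = {y ∈ V : β(x,y) = 0}` for `x ∈ a + V`, and let `S ≤ V`
have codimension `d` in `V`.  Then `(S ∩ B_{x₁·} ∩ … ∩ B_{x_k·}) + (S ∩ B_{y₁·} ∩ … ∩ B_{y_k·}) = S`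
for all but at most `81·p^{2d+4kr-s/4}·|V|^{2k}` choices of `(x,y) ∈ (a+V)^{2k}`. -/
theorem subspace_sums_regularity (p : ℕ) [hp : Fact p.Prime]
    (G : Type) [AddCommGroup G] [Module (ZMod p) G] [Fintype G]
    (r : ℕ) (β : G →ₗ[ZMod p] G →ₗ[ZMod p] (Fin r → ZMod p))
    (V : Submodule (ZMod p) G) (s : ℝ)
    (hrank : ∀ lam : Fin r → ZMod p, lam ≠ 0 →
      ∀ m : ℕ, HasBilinRankDecomp (fun x y : V => ∑ i, lam i * β (x : G) (y : G) i) m →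
        s ≤ (m : ℝ))
    (a : G) (S : Submodule (ZMod p) G) (hSV : S ≤ V) (d : ℕ)
    (hcodim : Module.finrank (ZMod p) V = Module.finrank (ZMod p) S + d)
    (k : ℕ) (hk : 0 < k) :
    (({ xy : (Fin k → G) × (Fin k → G) |
        ((∀ i, xy.1 i - a ∈ V) ∧ (∀ i, xy.2 i - a ∈ V)) ∧
        ¬ ((S ⊓ ⨅ i, V ⊓ LinearMap.ker (β (xy.1 i))) ⊔
            (S ⊓ ⨅ i, V ⊓ LinearMap.ker (β (xy.2 i))) = S) } :
      Set ((Fin k → G) × (Fin k → G))).ncard : ℝ) ≤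
      81 * (p : ℝ) ^ ((2 * (d : ℝ) + 4 * k * r) - s / 4) * (Nat.card ↥V : ℝ) ^ (2 * k) :=
  subspace_sums_regularity_general p (hp := hp) G r β V s hrank a S hSV d hcodim k
end

section
/- Let G, H be finite-dimensional F_p-vector spaces, let η ∈ (0,1), let k ≥ 2 and 2 ≤ ℓ ≤ k, and suppose φ_x : G → H is a linear map for each x ∈ G. Assume that for every linear map ψ : G → H, the inequality rank(φ_x − ψ) ≤ 8k + 2·log_p(η^{−1}) + 10 holds for at most p^{−8k+4}·η^2·|G| elements x ∈ G. Then for all but at most η·|G|^{2ℓ} of the tuples (x_1,...,x_{2ℓ−1}, z) ∈ G^{2ℓ}, the vectors φ_{x_1}(z), φ_{x_2}(z), ..., φ_{x_{2ℓ−1}}(z) ∈ H are linearly independent over F_p. -/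
/-!
If `φ_{x₁}(z), …, φ_{xₙ}(z)` are dependent, then `(∑ cᵢ φ_{xᵢ}) z = 0` for some nonzero
`c ∈ 𝔽_pⁿ`, so it suffices to bound, for each of the `pⁿ - 1` such `c`, the number of `(x, z)`
with `(∑ cᵢ φ_{xᵢ}) z = 0`. For fixed `x` this counts the kernel, of size `|G| p^{-rank}`, which
is negligible unless `∑ cᵢ φ_{xᵢ}` has rank at most `R = 8k + 2 log_p η⁻¹ + 10`. If `c_m ≠ 0`,
then `∑ cᵢ φ_{xᵢ} = c_m • (φ_{x_m} - ψ)` where `ψ` depends only on the other coordinates, so on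
each fibre of `x ↦ (xᵢ)_{i ≠ m}` the hypothesis allows at most `p^{-8k+4} η² |G|` low-rank
tuples. As `n = 2ℓ - 1 ≤ 2k - 1`, the total `(pⁿ - 1)(p^{-8k+4} + p^{-8k-10}) η² |G|^{n+1}` is
at most `η |G|^{2ℓ}`.
-/

open Finset LinearMap Module

section

variable {K G H ι : Type*} [Field K] [AddCommGroup G] [Module K G] [Fintype G]
  [AddCommGroup H] [Module K H]

theorem LinearMap.card_ker_mul_pow_finrank_range [Fintype K] [DecidableEq H] (f : G →ₗ[K] H) :
    #{z | f z = 0} * Fintype.card K ^ finrank K (range f) = Fintype.card G := by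
  have hker : #{z | f z = 0} = Nat.card (ker f) := by
    rw [← Fintype.card_subtype, ← Nat.card_eq_fintype_card]
    exact Nat.card_congr (Equiv.subtypeEquivRight fun _ => mem_ker.symm)
  rw [hker, natCard_eq_pow_finrank (K := K), Nat.card_eq_fintype_card (α := K), ← pow_add,
    add_comm, finrank_range_add_finrank_ker, card_eq_pow_finrank (K := K) (V := G)]

theorem LinearMap.card_ker_le_of_lt_finrank_range [Fintype K] [DecidableEq H] (f : G →ₗ[K] H)
    {R : ℝ} (hR : R < finrank K (range f)) :
    (#{z | f z = 0} : ℝ) ≤ Fintype.card G * (Fintype.card K : ℝ) ^ (-R) := by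
  have hq : (1 : ℝ) < Fintype.card K := by exact_mod_cast Fintype.one_lt_card
  have h := congrArg (Nat.cast : ℕ → ℝ) f.card_ker_mul_pow_finrank_range
  push_cast at h
  rw [← h, mul_assoc, ← Real.rpow_natCast, ← Real.rpow_add (by linarith)]
  refine le_mul_of_one_le_right (by positivity) (Real.one_le_rpow hq.le ?_)
  linarith

theorem sum_smul_funSplitAt_symm_apply {α M : Type*} [AddCommGroup M] [Module K M]
    [Fintype ι] [DecidableEq ι] (v : α → M) {c : ι → K} {m : ι} (hm : c m ≠ 0) (a : α)
    (y : {j // j ≠ m} → α) :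
    ∑ i, c i • v ((Equiv.funSplitAt m α).symm (a, y) i) =
      c m • (v a - -(c m)⁻¹ • ∑ j : {j // j ≠ m}, c j • v (y j)) := by
  rw [Fintype.sum_eq_add_sum_subtype_ne _ m, smul_sub, smul_smul, mul_neg, mul_inv_cancel₀ hm]
  simp only [Equiv.funSplitAt_symm_apply, dite_true, neg_smul, one_smul, sub_neg_eq_add]
  congr 1
  exact Fintype.sum_congr _ _ fun j => by simp [j.2]

theorem card_filter_finrank_range_sum_smul_le [Fintype ι] [DecidableEq ι]
    (φ : G → G →ₗ[K] H) {R Q : ℝ}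
    (hfar : ∀ ψ : G →ₗ[K] H,
      ({x | (finrank K (range (φ x - ψ)) : ℝ) ≤ R}.ncard : ℝ) ≤ Q * Fintype.card G)
    {c : ι → K} {m : ι} (hm : c m ≠ 0) :
    (#{x : ι → G | (finrank K (range (∑ i, c i • φ (x i))) : ℝ) ≤ R} : ℝ) ≤
      Q * Fintype.card G ^ Fintype.card ι := by
  set e := Equiv.funSplitAt m G
  set ψ : ({j // j ≠ m} → G) → G →ₗ[K] H :=
    fun y => -(c m)⁻¹ • ∑ j : {j // j ≠ m}, c j • φ (y j)
  have hfibre (y : {j // j ≠ m} → G) :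
      (#{g | (finrank K (range (∑ i, c i • φ (e.symm (g, y) i))) : ℝ) ≤ R} : ℝ) ≤
        Q * Fintype.card G := by
    have h := hfar (ψ y)
    rw [Set.ncard_eq_toFinset_card', Set.toFinset_ofPred] at h
    convert h using 4
    rw [sum_smul_funSplitAt_symm_apply φ hm, range_smul _ _ hm]
  have hcount : #{x : ι → G | (finrank K (range (∑ i, c i • φ (x i))) : ℝ) ≤ R} =
      ∑ y, #{g | (finrank K (range (∑ i, c i • φ (e.symm (g, y) i))) : ℝ) ≤ R} := by
    simp only [card_filter]
    rw [← e.symm.sum_comp, Fintype.sum_prod_type_right]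
  have hcard : Fintype.card ({j // j ≠ m} → G) * Fintype.card G =
      Fintype.card G ^ Fintype.card ι := by
    have : Nonempty ι := ⟨m⟩
    rw [Fintype.card_fun, Fintype.card_subtype_compl, Fintype.card_subtype_eq, ← pow_succ,
      Nat.sub_add_cancel Fintype.card_pos]
  calc (#{x : ι → G | (finrank K (range (∑ i, c i • φ (x i))) : ℝ) ≤ R} : ℝ)
      = ∑ y, (#{g | (finrank K (range (∑ i, c i • φ (e.symm (g, y) i))) : ℝ) ≤ R} : ℝ) :=
        mod_cast hcount
    _ ≤ ∑ _y : {j // j ≠ m} → G, Q * Fintype.card G := sum_le_sum fun y _ => hfibre y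
    _ = Q * Fintype.card G ^ Fintype.card ι := by
        rw [sum_const, nsmul_eq_mul, card_univ, mul_left_comm, ← Nat.cast_mul, hcard,
          Nat.cast_pow]

theorem card_sum_smul_apply_eq_zero_le [Fintype K] [DecidableEq H] [Fintype ι] [DecidableEq ι]
    (φ : G → G →ₗ[K] H) {R Q : ℝ}
    (hfar : ∀ ψ : G →ₗ[K] H,
      ({x | (finrank K (range (φ x - ψ)) : ℝ) ≤ R}.ncard : ℝ) ≤ Q * Fintype.card G)
    {c : ι → K} (hc : c ≠ 0) :
    (#{w : (ι → G) × G | (∑ i, c i • φ (w.1 i)) w.2 = 0} : ℝ) ≤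
      (Q + (Fintype.card K : ℝ) ^ (-R)) * Fintype.card G ^ (Fintype.card ι + 1) := by
  classical
  obtain ⟨m, hm⟩ := Function.ne_iff.mp hc
  set F : (ι → G) → G →ₗ[K] H := fun x => ∑ i, c i • φ (x i)
  set low : Finset (ι → G) := {x | (finrank K (range (F x)) : ℝ) ≤ R}
  set q : ℝ := (Fintype.card K : ℝ)
  set N : ℝ := (Fintype.card G : ℝ)
  have hfibre (x : ι → G) :
      (#{z | F x z = 0} : ℝ) ≤ (if x ∈ low then N else 0) + N * q ^ (-R) := by
    split_ifs with hx
    · refine le_add_of_le_of_nonneg ?_ (by positivity)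
      exact Nat.cast_le.mpr ((card_filter_le _ _).trans_eq card_univ)
    · simpa [low] using (F x).card_ker_le_of_lt_finrank_range (by simpa [low] using hx)
  have hcount : #{w : (ι → G) × G | F w.1 w.2 = 0} = ∑ x, #{z | F x z = 0} := by
    simp only [card_filter, Fintype.sum_prod_type]
  calc (#{w : (ι → G) × G | F w.1 w.2 = 0} : ℝ)
      = ∑ x, (#{z | F x z = 0} : ℝ) := by exact_mod_cast hcount
    _ ≤ ∑ x, ((if x ∈ low then N else 0) + N * q ^ (-R)) := sum_le_sum fun x _ => hfibre x
    _ = #low * N + N ^ Fintype.card ι * (N * q ^ (-R)) := by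
        rw [sum_add_distrib, sum_ite_mem, univ_inter, sum_const, sum_const, card_univ,
          Fintype.card_fun, nsmul_eq_mul, nsmul_eq_mul]
        push_cast
        rfl
    _ ≤ Q * N ^ Fintype.card ι * N + N ^ Fintype.card ι * (N * q ^ (-R)) := by
        gcongr
        exact card_filter_finrank_range_sum_smul_le φ hfar hm
    _ = (Q + q ^ (-R)) * N ^ (Fintype.card ι + 1) := by ring

theorem card_not_linearIndependent_le [Fintype K] [Fintype ι] [DecidableEq ι]
    (φ : G → G →ₗ[K] H) {R Q : ℝ}
    (hfar : ∀ ψ : G →ₗ[K] H,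
      ({x | (finrank K (range (φ x - ψ)) : ℝ) ≤ R}.ncard : ℝ) ≤ Q * Fintype.card G) :
    ({w : (ι → G) × G | ¬LinearIndependent K fun i => φ (w.1 i) w.2}.ncard : ℝ) ≤
      ((Fintype.card K : ℝ) ^ Fintype.card ι - 1) *
        ((Q + (Fintype.card K : ℝ) ^ (-R)) * Fintype.card G ^ (Fintype.card ι + 1)) := by
  classical
  set bad : (ι → K) → Finset ((ι → G) × G) :=
    fun c => {w | (∑ i, c i • φ (w.1 i)) w.2 = 0}
  have hsub : ({w | ¬LinearIndependent K fun i => φ (w.1 i) w.2} : Finset ((ι → G) × G)) ⊆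
      ({c | c ≠ 0} : Finset (ι → K)).biUnion bad := by
    intro w hw
    obtain ⟨c, hsum, i, hi⟩ := Fintype.not_linearIndependent_iff.mp (mem_filter.mp hw).2
    simp only [mem_biUnion, mem_filter, mem_univ, true_and, bad]
    exact ⟨c, Function.ne_iff.mpr ⟨i, hi⟩, by simpa using hsum⟩
  have hnonzero :
      (#{c : ι → K | c ≠ 0} : ℝ) = (Fintype.card K : ℝ) ^ Fintype.card ι - 1 := by
    rw [filter_ne' univ 0, card_erase_of_mem (mem_univ _), card_univ, Fintype.card_fun,
      Nat.cast_sub (Nat.one_le_pow _ _ Fintype.card_pos)]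
    push_cast
    ring
  rw [Set.ncard_eq_toFinset_card', Set.toFinset_ofPred]
  calc _ ≤ (#(({c | c ≠ 0} : Finset (ι → K)).biUnion bad) : ℝ) := by
        exact_mod_cast card_le_card hsub
    _ ≤ ∑ c ∈ {c | c ≠ 0}, (#(bad c) : ℝ) := by exact_mod_cast card_biUnion_le
    _ ≤ ∑ c ∈ ({c | c ≠ 0} : Finset (ι → K)),
          (Q + (Fintype.card K : ℝ) ^ (-R)) * Fintype.card G ^ (Fintype.card ι + 1) :=
        sum_le_sum fun c hc => card_sum_smul_apply_eq_zero_le φ hfar (mem_filter.mp hc).2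
    _ = _ := by rw [sum_const, nsmul_eq_mul, hnonzero]

end

theorem Real.rpow_neg_two_mul_logb_inv {b x : ℝ} (hb : 0 < b) (hb1 : b ≠ 1) (hx : 0 < x) :
    b ^ (-(2 * Real.logb b x⁻¹)) = x ^ 2 := by
  rw [Real.logb_inv, mul_neg, neg_neg, mul_comm, Real.rpow_mul hb.le, Real.rpow_logb hb hb1 hx,
    Real.rpow_two]

theorem pow_sub_one_mul_density_le {p η : ℝ} (hp : 2 ≤ p) (hη : 0 < η) (hη1 : η < 1) {k n : ℕ}
    (hn : n + 1 ≤ 2 * k) :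
    (p ^ n - 1) * (p ^ (-8 * (k : ℤ) + 4) * η ^ 2 +
      p ^ (-(8 * (k : ℝ) + 2 * Real.logb p η⁻¹ + 10))) ≤ η := by
  have hp0 : 0 < p := by linarith
  have hnk : (n : ℝ) + 1 ≤ 2 * k := by exact_mod_cast hn
  have hk : (1 : ℝ) ≤ k := by exact_mod_cast (by omega : 1 ≤ k)
  have hsmall (e : ℝ) (he : n + e ≤ -1) : p ^ n * p ^ e ≤ 1 / 2 := by
    rw [← Real.rpow_natCast, ← Real.rpow_add hp0]
    calc p ^ ((n : ℝ) + e) ≤ p ^ (-1 : ℝ) := Real.rpow_le_rpow_of_exponent_le (by linarith) he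
      _ ≤ 1 / 2 := by
        rw [Real.rpow_neg_one]
        exact inv_le_of_inv_le₀ (by norm_num) (by linarith)
  have h₁ := hsmall (-8 * k + 4) (by linarith)
  have h₂ := hsmall (-(8 * k + 10)) (by linarith)
  have hsplit : p ^ (-(8 * (k : ℝ) + 2 * Real.logb p η⁻¹ + 10)) =
      p ^ (-(8 * (k : ℝ) + 10)) * η ^ 2 := by
    rw [show -(8 * (k : ℝ) + 2 * Real.logb p η⁻¹ + 10) =
        -(8 * k + 10) + -(2 * Real.logb p η⁻¹) by ring,
      Real.rpow_add hp0, Real.rpow_neg_two_mul_logb_inv hp0 (by linarith) hη]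
  have hzpow : p ^ (-8 * (k : ℤ) + 4) = p ^ (-8 * (k : ℝ) + 4) := by
    rw [← Real.rpow_intCast]; push_cast; rfl
  rw [hsplit, hzpow]
  have hpe₁ : 0 ≤ p ^ (-8 * (k : ℝ) + 4) := by positivity
  have hpe₂ : 0 ≤ p ^ (-(8 * (k : ℝ) + 10)) := by positivity
  nlinarith [sq_nonneg η]

theorem frequent_linear_independence_general (p : ℕ) [hp : Fact p.Prime]
    (G H : Type) [AddCommGroup G] [Module (ZMod p) G] [Fintype G]
    [AddCommGroup H] [Module (ZMod p) H]
    (η : ℝ) (hη : 0 < η) (hη1 : η < 1)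
    (k ℓ : ℕ) (hℓ : 2 ≤ ℓ) (hℓk : ℓ ≤ k)
    (φ : G → (G →ₗ[ZMod p] H))
    (hfar : ∀ ψ : G →ₗ[ZMod p] H,
      (({ x : G | (Module.finrank (ZMod p) (LinearMap.range (φ x - ψ)) : ℝ) ≤
          8 * (k : ℝ) + 2 * Real.logb p η⁻¹ + 10 } : Set G).ncard : ℝ) ≤
        (p : ℝ) ^ (-8 * (k : ℤ) + 4) * η ^ 2 * (Fintype.card G : ℝ)) :
    (({ w : (Fin (2 * ℓ - 1) → G) × G |
        ¬ LinearIndependent (ZMod p) (fun i : Fin (2 * ℓ - 1) => φ (w.1 i) w.2) } :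
      Set ((Fin (2 * ℓ - 1) → G) × G)).ncard : ℝ) ≤
      η * (Fintype.card G : ℝ) ^ (2 * ℓ) := by
  have hcount := card_not_linearIndependent_le (ι := Fin (2 * ℓ - 1)) φ hfar
  rw [ZMod.card, Fintype.card_fin, Nat.sub_add_cancel (by omega : 1 ≤ 2 * ℓ)] at hcount
  refine hcount.trans ?_
  rw [← mul_assoc]
  gcongr
  exact pow_sub_one_mul_density_le (by exact_mod_cast hp.out.two_le) hη hη1 (by omega)

/-- **Frequent linear independence.** If no single linear map `ψ` is within rank
`8k + 2 log_p(η⁻¹) + 10` of more than `p^{-8k+4}η²|G|` of the maps `φ_x`, then for all but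
at most `η|G|^{2ℓ}` tuples `(x₁,…,x_{2ℓ-1}, z)` the vectors `φ_{x₁}(z),…,φ_{x_{2ℓ-1}}(z)`
are linearly independent. -/
theorem frequent_linear_independence (p : ℕ) [hp : Fact p.Prime]
    (G H : Type) [AddCommGroup G] [Module (ZMod p) G] [Fintype G]
    [AddCommGroup H] [Module (ZMod p) H] [Module.Finite (ZMod p) H]
    (η : ℝ) (hη : 0 < η) (hη1 : η < 1)
    (k ℓ : ℕ) (hk : 2 ≤ k) (hℓ : 2 ≤ ℓ) (hℓk : ℓ ≤ k)
    (φ : G → (G →ₗ[ZMod p] H))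
    (hfar : ∀ ψ : G →ₗ[ZMod p] H,
      (({ x : G | (Module.finrank (ZMod p) (LinearMap.range (φ x - ψ)) : ℝ) ≤
          8 * (k : ℝ) + 2 * Real.logb p η⁻¹ + 10 } : Set G).ncard : ℝ) ≤
        (p : ℝ) ^ (-8 * (k : ℤ) + 4) * η ^ 2 * (Fintype.card G : ℝ)) :
    (({ w : (Fin (2 * ℓ - 1) → G) × G |
        ¬ LinearIndependent (ZMod p) (fun i : Fin (2 * ℓ - 1) => φ (w.1 i) w.2) } :
      Set ((Fin (2 * ℓ - 1) → G) × G)).ncard : ℝ) ≤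
      η * (Fintype.card G : ℝ) ^ (2 * ℓ) :=
  frequent_linear_independence_general p (hp := hp) G H η hη hη1 k ℓ hℓ hℓk φ hfar
end
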